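/- Let M →^R A be a relative Rota-Baxter algebra and (N →^S B, l, r) a bimodule over it. Then the operator δ_rRB on the graded space C^k_rRB = Hom(A^⊗k, B) ⊕ Hom(𝒜^{k−1,1}, N) ⊕ Hom(M^⊗(k−1), B) (with C^1_rRB = Hom(A,B) ⊕ Hom(M,N)), given by δ_rRB(α, β, γ) = (δ_{A,B}(α), δ^α_{A,N}(β), δ_{M,B}(γ) + h_R(α, β)), satisfies (δ_rRB)² = 0. -/

import Mathlib

/-- The Hochschild-type coboundary operator associated with a multiplication `mu`
and a pair of actions `aL`, `aR`. -/
def hochD {X Y : Type*} [AddCommGroup Y] (mu : X → X → X)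
    (aL : X → Y → Y) (aR : Y → X → Y) {k : ℕ}
    (f : (Fin k → X) → Y) : (Fin (k + 1) → X) → Y :=
  fun a =>
    aL (a 0) (f (fun j => a j.succ))
      + ∑ i ∈ Finset.range k, ((-1 : ℤ) ^ (i + 1)) •
          f (fun j => if (j : ℕ) < i then a j.castSucc
              else if (j : ℕ) = i then mu (a j.castSucc) (a j.succ)
              else a j.succ)
      + ((-1 : ℤ) ^ (k + 1)) • aR (f (fun j => a j.castSucc)) (a (Fin.last k))

/-- The Hochschild coboundary `δ_{A,B}` of `A` with coefficients in the
`A`-bimodule `B`. -/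
def dAB {A B : Type*} [AddCommGroup B] (mul : A → A → A)
    (bl : A → B → B) (br : B → A → B) {k : ℕ}
    (α : (Fin k → A) → B) : (Fin (k + 1) → A) → B :=
  hochD mul bl br α

/-- The twisted coboundary `δ^α_{A,N}` on mixed cochains (a cochain on `𝒜^{k-1,1}`
is represented as a function on tuples of elements of `A × M`). -/
def dMix {A M B N : Type*} [AddCommGroup A] [AddCommGroup M] [AddCommGroup B] [AddCommGroup N]
    (mul : A → A → A) (al : A → M → M) (ar : M → A → M)
    (bl : A → B → B) (br : B → A → B) (nl : A → N → N) (nr : N → A → N)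
    (l : M → B → N) (r : B → M → N) {k : ℕ}
    (α : (Fin k → A) → B) (β : (Fin k → A × M) → N) :
    (Fin (k + 1) → A × M) → N :=
  fun x =>
    (hochD (fun p q => (mul p.1 q.1, al p.1 q.2 + ar p.2 q.1))
      (fun p w => (bl p.1 w.1, nl p.1 w.2 + l p.2 w.1))
      (fun w p => (br w.1 p.1, r w.1 p.2 + nr w.2 p.1))
      (fun z => (α (fun j => (z j).1), β z)) x).2

/-- The Hochschild coboundary `δ_{M,B}` of the total algebra `M_Tot` with
coefficients in the bimodule `B_{▷,◁}`. -/
def dMB {A M B N : Type*} [AddCommGroup A] [AddCommGroup M] [AddCommGroup B]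
    (al : A → M → M) (ar : M → A → M) (bl : A → B → B) (br : B → A → B)
    (R : M → A) (S : N → B) (l : M → B → N) (r : B → M → N) {k : ℕ}
    (γ : (Fin k → M) → B) : (Fin (k + 1) → M) → B :=
  hochD (fun m m' => al (R m) m' + ar m (R m'))
    (fun m b => bl (R m) b - S (l m b))
    (fun b m => br b (R m) - S (r b m)) γ

/-- The map `h_R`. -/
def hRc {A M B N : Type*} [AddCommGroup A] [AddCommGroup M] [AddCommGroup B]
    (R : M → A) (S : N → B) {k : ℕ}
    (α : (Fin k → A) → B) (β : (Fin k → A × M) → N) : (Fin k → M) → B :=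
  fun m => ((-1 : ℤ) ^ k) •
    (α (fun j => R (m j))
      - ∑ i : Fin k, S (β (fun j => if j = i then ((0 : A), m j) else (R (m j), (0 : M)))))

/-- The mixed cochain on `𝒜^{k-1,1}` determined by its components: the component
`βs s` takes the `A`-arguments together with the `M`-argument in position `s`. -/
def extMixed {A M N : Type*} [AddCommGroup N] {k : ℕ}
    (βs : Fin k → ((Fin k → A) → M → N)) : (Fin k → A × M) → N :=
  fun z => ∑ s : Fin k, βs s (fun j => (z j).1) (z s).2

/-!
Each of `δ_{A,B}`, `δ^α_{A,N}` and `δ_{M,B}` is (a component of) a Hochschild coboundary: of `A`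
with coefficients in `B`, of the semidirect product `A ⋉ M` with coefficients in `B ⊕ N`, and of
`M_Tot` with coefficients in `B_{▷,◁}`. A Hochschild coboundary squares to zero by the simplicial
identities between its cofaces. The remaining cross term
`δ_{M,B} ∘ h_R + h_R ∘ (δ_{A,B}, δ^α_{A,N})` vanishes because `h_R` is, up to the sign `(-1)ᵏ`,
the pullback of a cochain of `A ⋉ M` along the algebra map `m ↦ (R m, m) : M_Tot → A ⋉ M`
followed by the module map `(b, n) ↦ b - S n : B ⊕ N → B_{▷,◁}`, and Hochschild coboundaries
are natural in both.
-/

theorem Finset.sum_range_sum_range_alternating_eq_zero {G : Type*} [AddCommGroup G] (n : ℕ)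
    (F : ℕ → ℕ → G) (hF : ∀ i j, j < i → i ≤ n + 1 → F i j = F j (i - 1)) :
    ∑ i ∈ range (n + 2), ∑ j ∈ range (n + 1), ((-1 : ℤ) ^ (i + j)) • F i j = 0 := by
  rw [← Finset.sum_product', ← Finset.sum_filter_add_sum_filter_not _ (fun p => p.2 < p.1),
    add_eq_zero_iff_eq_neg, ← Finset.sum_neg_distrib]
  -- `(i, j) ↦ (j, i - 1)` matches the terms with `j < i` with the others, with opposite signs
  refine Finset.sum_nbij' (fun p => (p.2, p.1 - 1)) (fun p => (p.2 + 1, p.1)) ?_ ?_ ?_ ?_ ?_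
  all_goals
    rintro ⟨i, j⟩ h
    simp only [Finset.mem_filter, Finset.mem_product, Finset.mem_range] at h ⊢
  · refine ⟨⟨by omega, by omega⟩, by omega⟩
  · omega
  · exact Prod.ext (by simp; omega) rfl
  · simp
  · rw [hF i j h.2 (by omega), show i + j = j + (i - 1) + 1 by omega, pow_succ, mul_neg_one,
      neg_smul]

namespace Fin

variable {n : ℕ} {V : Type*} [Zero V]

theorem tail_single_zero (v : V) : tail (Pi.single 0 v : Fin (n + 1) → V) = 0 :=
  funext fun j => Pi.single_eq_of_ne (succ_ne_zero j) v

theorem tail_single_succ (i : Fin n) (v : V) :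
    tail (Pi.single i.succ v : Fin (n + 1) → V) = Pi.single i v := by
  funext j
  simp [tail, Pi.single_apply]

theorem init_single_last (v : V) : init (Pi.single (last n) v : Fin (n + 1) → V) = 0 :=
  funext fun j => Pi.single_eq_of_ne (M := fun _ => V) (castSucc_lt_last j).ne v

theorem init_single_castSucc (i : Fin n) (v : V) :
    init (Pi.single i.castSucc v : Fin (n + 1) → V) = Pi.single i v := by
  funext j
  simp [init, Pi.single_apply]

theorem val_predAbove (p : Fin n) (i : Fin (n + 1)) :
    (p.predAbove i : ℕ) = if (p : ℕ) < i then (i : ℕ) - 1 else i := by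
  unfold Fin.predAbove
  split_ifs with h₁ h₂ h₂ <;> simp only [Fin.lt_def, Fin.val_castSucc] at h₁ <;>
    simp only [Fin.val_pred, Fin.coe_castPred] <;> omega

end Fin

namespace Hochschild

variable {X Y : Type*}

structure IsBimodule [AddCommGroup Y] (mu : X → X → X) (aL : X → Y → Y) (aR : Y → X → Y) :
    Prop where
  mul_assoc : ∀ a b c, mu (mu a b) c = mu a (mu b c)
  left_add : ∀ x y y', aL x (y + y') = aL x y + aL x y'
  right_add : ∀ y y' x, aR (y + y') x = aR y x + aR y' x
  left_mul : ∀ x x' y, aL (mu x x') y = aL x (aL x' y)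
  left_right : ∀ x y x', aR (aL x y) x' = aL x (aR y x')
  right_mul : ∀ y x x', aR (aR y x) x' = aR y (mu x x')

section Face

variable (mu : X → X → X)

def face {k : ℕ} (i : ℕ) (a : Fin (k + 1) → X) : Fin k → X :=
  fun j => if (j : ℕ) < i then a j.castSucc
    else if (j : ℕ) = i then mu (a j.castSucc) (a j.succ) else a j.succ

/-- `face` on sequences, where two faces commute without boundary cases. -/
def seqFace (i : ℕ) (a : ℕ → X) : ℕ → X :=
  fun s => if s < i then a s else if s = i then mu (a s) (a (s + 1)) else a (s + 1)

def toSeq {k : ℕ} (a : Fin (k + 1) → X) : ℕ → X := fun s => a ⟨min s k, by omega⟩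

theorem seqFace_of_lt (i : ℕ) (a : ℕ → X) {s : ℕ} (h : s < i) : seqFace mu i a s = a s :=
  if_pos h

theorem seqFace_self (i : ℕ) (a : ℕ → X) : seqFace mu i a i = mu (a i) (a (i + 1)) := by
  simp [seqFace]

theorem seqFace_of_gt (i : ℕ) (a : ℕ → X) {s : ℕ} (h : i < s) :
    seqFace mu i a s = a (s + 1) := by
  simp only [seqFace, if_neg (show ¬ s < i by omega), if_neg (show s ≠ i by omega)]

theorem seqFace_congr (i : ℕ) {a b : ℕ → X} {s : ℕ} (h₀ : a s = b s)
    (h₁ : a (s + 1) = b (s + 1)) : seqFace mu i a s = seqFace mu i b s := by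
  simp only [seqFace, h₀, h₁]

theorem seqFace_seqFace (hmu : ∀ a b c, mu (mu a b) c = mu a (mu b c)) {p q : ℕ}
    (hpq : p < q) (a : ℕ → X) :
    seqFace mu p (seqFace mu q a) = seqFace mu (q - 1) (seqFace mu p a) := by
  funext s
  rcases Nat.lt_trichotomy s p with hs | rfl | hs
  · rw [seqFace_of_lt _ _ _ hs, seqFace_of_lt _ _ _ (by omega), seqFace_of_lt _ _ _ (by omega),
      seqFace_of_lt _ _ _ hs]
  · rw [seqFace_self]
    rcases Nat.lt_or_ge (s + 1) q with h | h
    · rw [seqFace_of_lt _ _ _ hpq, seqFace_of_lt _ _ _ h, seqFace_of_lt _ _ _ (by omega),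
        seqFace_self]
    · obtain rfl : q = s + 1 := by omega
      rw [seqFace_of_lt _ _ _ hpq, seqFace_self, Nat.add_sub_cancel, seqFace_self, seqFace_self,
        seqFace_of_gt _ _ _ (by omega), hmu]
  · rw [seqFace_of_gt _ _ _ hs]
    rcases Nat.lt_trichotomy s (q - 1) with h | rfl | h
    · rw [seqFace_of_lt _ _ _ (by omega), seqFace_of_lt _ _ _ h, seqFace_of_gt _ _ _ hs]
    · rw [Nat.sub_add_cancel (by omega), seqFace_self, seqFace_self,
        seqFace_of_gt _ _ _ (by omega), seqFace_of_gt _ _ _ (by omega),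
        Nat.sub_add_cancel (by omega)]
    · rw [seqFace_of_gt _ _ _ (by omega), seqFace_of_gt _ _ _ h, seqFace_of_gt _ _ _ (by omega)]

theorem face_apply_eq_seqFace {k : ℕ} (i : ℕ) (a : Fin (k + 1) → X) (j : Fin k) :
    face mu i a j = seqFace mu i (toSeq a) j := by
  have h₀ : toSeq a j = a j.castSucc := congrArg a (Fin.ext (by simp))
  have h₁ : toSeq a (j + 1) = a j.succ := congrArg a (Fin.ext (by simp))
  simp only [face, seqFace, h₀, h₁]

theorem toSeq_face_apply {k : ℕ} (i : ℕ) (a : Fin (k + 2) → X) {s : ℕ} (hs : s ≤ k) :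
    toSeq (face mu i a) s = seqFace mu i (toSeq a) s := by
  rw [← face_apply_eq_seqFace mu i a ⟨s, by omega⟩]
  exact congrArg (face mu i a) (Fin.ext (by simp; omega))

theorem face_face (hmu : ∀ a b c, mu (mu a b) c = mu a (mu b c)) {k : ℕ} {p q : ℕ}
    (hpq : p < q) (a : Fin (k + 2) → X) :
    face mu p (face mu q a) = face mu (q - 1) (face mu p a) := by
  funext j
  have hj := j.isLt
  rw [face_apply_eq_seqFace, face_apply_eq_seqFace,
    seqFace_congr mu p (toSeq_face_apply mu q a (by omega)) (toSeq_face_apply mu q a (by omega)),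
    seqFace_congr mu (q - 1) (toSeq_face_apply mu p a (by omega))
      (toSeq_face_apply mu p a (by omega)),
    seqFace_seqFace mu hmu hpq]

theorem tail_face {k : ℕ} {i : ℕ} (hi : 1 ≤ i) (a : Fin (k + 2) → X) :
    Fin.tail (face mu i a) = face mu (i - 1) (Fin.tail a) := by
  funext j
  simp only [face, Fin.tail, Fin.val_succ, Fin.succ_castSucc]
  split_ifs <;> first | rfl | omega

theorem tail_face_zero {k : ℕ} (a : Fin (k + 2) → X) :
    Fin.tail (face mu 0 a) = Fin.tail (Fin.tail a) := by
  funext j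
  simp [face, Fin.tail]

theorem init_face {k : ℕ} (i : ℕ) (a : Fin (k + 2) → X) :
    Fin.init (face mu i a) = face mu i (Fin.init a) := by
  funext j
  simp only [face, Fin.init, Fin.val_castSucc, Fin.succ_castSucc]

theorem face_zero_apply_zero {k : ℕ} (a : Fin (k + 2) → X) :
    face mu 0 a 0 = mu (a 0) (a 1) := by
  simp [face]

theorem face_apply_zero {k : ℕ} {i : ℕ} (hi : 1 ≤ i) (a : Fin (k + 2) → X) :
    face mu i a 0 = a 0 := by
  simp [face, show 0 < i by omega]

theorem face_apply_last {k : ℕ} {i : ℕ} (hi : i < k) (a : Fin (k + 2) → X) :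
    face mu i a (Fin.last k) = a (Fin.last (k + 1)) := by
  simp [face, show ¬ k < i by omega, show k ≠ i by omega]

theorem face_self_apply_last {k : ℕ} (a : Fin (k + 2) → X) :
    face mu k a (Fin.last k) = mu (a (Fin.last k).castSucc) (a (Fin.last (k + 1))) := by
  simp [face]

theorem face_of_le {k : ℕ} {i : ℕ} (hi : k ≤ i) (a : Fin (k + 1) → X) :
    face mu i a = Fin.init a := by
  funext j
  simp [face, Fin.init, show (j : ℕ) < i by omega]

theorem face_update_zero [Zero X] (h₀ : ∀ x, mu 0 x = 0) (h₀' : ∀ x, mu x 0 = 0) {k j : ℕ}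
    (hj : j < k) (a : Fin (k + 1) → X) (i : Fin (k + 1)) :
    face mu j (Function.update a i 0)
      = Function.update (face mu j a) (Fin.predAbove ⟨j, hj⟩ i) 0 := by
  funext t
  have hv := Fin.val_predAbove ⟨j, hj⟩ i
  simp only [face, Function.update_apply, Fin.ext_iff, Fin.val_castSucc, Fin.val_succ] at hv ⊢
  split_ifs at hv ⊢ <;> first | rfl | omega | simp only [h₀, h₀']

end Face

section Coface

variable (mu : X → X → X) (aL : X → Y → Y) (aR : Y → X → Y)

def coface {k : ℕ} (i : ℕ) (f : (Fin k → X) → Y) : (Fin (k + 1) → X) → Y :=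
  fun a => if i = 0 then aL (a 0) (f (Fin.tail a))
    else if i = k + 1 then aR (f (Fin.init a)) (a (Fin.last k))
    else f (face mu (i - 1) a)

variable {k : ℕ} (f : (Fin k → X) → Y) (a : Fin (k + 1) → X)

theorem coface_zero : coface mu aL aR 0 f a = aL (a 0) (f (Fin.tail a)) := if_pos rfl

theorem coface_last : coface mu aL aR (k + 1) f a = aR (f (Fin.init a)) (a (Fin.last k)) := by
  simp [coface]

theorem coface_of_pos {i : ℕ} (h₁ : 1 ≤ i) (h₂ : i ≤ k) :
    coface mu aL aR i f a = f (face mu (i - 1) a) := by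
  simp only [coface, if_neg (show i ≠ 0 by omega), if_neg (show i ≠ k + 1 by omega)]

variable [AddCommGroup Y]

theorem hochD_apply :
    hochD mu aL aR f a = aL (a 0) (f (Fin.tail a))
      + ∑ i ∈ Finset.range k, ((-1 : ℤ) ^ (i + 1)) • f (face mu i a)
      + ((-1 : ℤ) ^ (k + 1)) • aR (f (Fin.init a)) (a (Fin.last k)) := rfl

theorem hochD_eq_sum_coface :
    hochD mu aL aR f a = ∑ i ∈ Finset.range (k + 2), ((-1 : ℤ) ^ i) • coface mu aL aR i f a := by
  have hmid : ∀ i ∈ Finset.range k, ((-1 : ℤ) ^ (i + 1)) • coface mu aL aR (i + 1) f a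
      = ((-1 : ℤ) ^ (i + 1)) • f (face mu i a) := fun i hi => by
    rw [coface_of_pos mu aL aR f a (by omega) (Finset.mem_range.mp hi), Nat.succ_sub_one]
  rw [Finset.sum_range_succ, Finset.sum_range_succ', Finset.sum_congr rfl hmid, hochD_apply,
    coface_zero, coface_last, pow_zero, one_smul]
  abel

theorem coface_coface (h : IsBimodule mu aL aR) {f : (Fin k → X) → Y} {i j : ℕ} (hji : j < i)
    (hi : i ≤ k + 2) (a : Fin (k + 2) → X) :
    coface mu aL aR i (coface mu aL aR j f) a
      = coface mu aL aR j (coface mu aL aR (i - 1) f) a := by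
  rcases Nat.eq_zero_or_pos j with rfl | hj
  · rcases (show i = 1 ∨ (2 ≤ i ∧ i ≤ k + 1) ∨ i = k + 2 by omega) with rfl | hi' | rfl
    · rw [coface_of_pos mu aL aR _ _ le_rfl (by omega), coface_zero, coface_zero, coface_zero,
        Nat.sub_self, face_zero_apply_zero, tail_face_zero, h.left_mul]
      rfl
    · rw [coface_of_pos mu aL aR _ _ (by omega) hi'.2, coface_zero, coface_zero,
        coface_of_pos mu aL aR _ _ (by omega) (by omega), face_apply_zero mu (by omega),
        tail_face mu (by omega)]
    · rw [coface_last, coface_zero, coface_zero, show k + 2 - 1 = k + 1 from rfl, coface_last,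
        ← Fin.tail_init_eq_init_tail, h.left_right]
      rfl
  · rcases (show i ≤ k + 1 ∨ (i = k + 2 ∧ j ≤ k) ∨ (i = k + 2 ∧ j = k + 1) by omega)
      with hi' | ⟨rfl, hj'⟩ | ⟨rfl, rfl⟩
    · rw [coface_of_pos mu aL aR _ _ (by omega) hi', coface_of_pos mu aL aR _ _ hj (by omega),
        coface_of_pos mu aL aR _ _ hj (by omega), coface_of_pos mu aL aR _ _ (by omega) (by omega),
        face_face mu h.mul_assoc (by omega : j - 1 < i - 1)]
    · rw [coface_last, coface_of_pos mu aL aR _ _ hj hj', coface_of_pos mu aL aR _ _ hj (by omega),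
        show k + 2 - 1 = k + 1 from rfl, coface_last, init_face, face_apply_last mu (by omega)]
    · rw [coface_last, coface_last, coface_of_pos mu aL aR _ _ (by omega) le_rfl,
        show k + 2 - 1 = k + 1 from rfl, coface_last, Nat.add_sub_cancel, init_face,
        face_of_le mu le_rfl, face_self_apply_last, h.right_mul]
      rfl

end Coface

section Complex

variable [AddCommGroup Y] {mu : X → X → X} {aL : X → Y → Y} {aR : Y → X → Y}

theorem coface_add (hL : ∀ x y y', aL x (y + y') = aL x y + aL x y')
    (hR : ∀ y y' x, aR (y + y') x = aR y x + aR y' x) {k : ℕ} (i : ℕ)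
    (f g : (Fin k → X) → Y) (a : Fin (k + 1) → X) :
    coface mu aL aR i (f + g) a = coface mu aL aR i f a + coface mu aL aR i g a := by
  simp only [coface]
  split_ifs <;> simp only [Pi.add_apply, hL, hR]

theorem hochD_add (hL : ∀ x y y', aL x (y + y') = aL x y + aL x y')
    (hR : ∀ y y' x, aR (y + y') x = aR y x + aR y' x) {k : ℕ} (f g : (Fin k → X) → Y)
    (a : Fin (k + 1) → X) :
    hochD mu aL aR (f + g) a = hochD mu aL aR f a + hochD mu aL aR g a := by
  simp only [hochD_eq_sum_coface, coface_add hL hR, smul_add, Finset.sum_add_distrib]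

theorem hochD_zsmul (hL : ∀ x y y', aL x (y + y') = aL x y + aL x y')
    (hR : ∀ y y' x, aR (y + y') x = aR y x + aR y' x) (c : ℤ) {k : ℕ} (f : (Fin k → X) → Y)
    (a : Fin (k + 1) → X) : hochD mu aL aR (c • f) a = c • hochD mu aL aR f a :=
  map_zsmul (AddMonoidHom.mk' (fun f => hochD mu aL aR f a) fun f g => hochD_add hL hR f g a) c f

theorem hochD_hochD (h : IsBimodule mu aL aR) {k : ℕ} (f : (Fin k → X) → Y)
    (a : Fin (k + 2) → X) : hochD mu aL aR (hochD mu aL aR f) a = 0 := by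
  let cofaceAt (i : ℕ) : ((Fin (k + 1) → X) → Y) →+ Y := AddMonoidHom.mk'
    (fun g => coface mu aL aR i g a) (fun g g' => coface_add h.left_add h.right_add i g g' a)
  have hf : hochD mu aL aR f
      = ∑ j ∈ Finset.range (k + 2), ((-1 : ℤ) ^ j) • coface mu aL aR j f := by
    funext b
    simp only [hochD_eq_sum_coface, Finset.sum_apply, Pi.smul_apply]
  have hsplit : ∀ i, ((-1 : ℤ) ^ i) • coface mu aL aR i (hochD mu aL aR f) a
      = ∑ j ∈ Finset.range (k + 2),
          ((-1 : ℤ) ^ (i + j)) • coface mu aL aR i (coface mu aL aR j f) a := by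
    intro i
    change ((-1 : ℤ) ^ i) • cofaceAt i (hochD mu aL aR f) = _
    simp only [hf, map_sum, map_zsmul, Finset.smul_sum, smul_smul, ← pow_add]
    rfl
  rw [hochD_eq_sum_coface, Finset.sum_congr rfl fun i _ => hsplit i]
  exact Finset.sum_range_sum_range_alternating_eq_zero (k + 1) _
    fun i j hji hi => coface_coface mu aL aR h hji hi a

theorem hochD_congr {k : ℕ} {f g : (Fin k → X) → Y} {a : Fin (k + 1) → X}
    (h_tail : f (Fin.tail a) = g (Fin.tail a))
    (h_face : ∀ i < k, f (face mu i a) = g (face mu i a))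
    (h_init : f (Fin.init a) = g (Fin.init a)) :
    hochD mu aL aR f a = hochD mu aL aR g a := by
  rw [hochD_apply, hochD_apply, h_tail, h_init,
    Finset.sum_congr rfl fun i hi => by rw [h_face i (Finset.mem_range.mp hi)]]

theorem map_face {X' : Type*} {mu' : X' → X' → X'} {σ : X → X'}
    (hσ : ∀ x x', σ (mu x x') = mu' (σ x) (σ x')) {k : ℕ} (i : ℕ) (a : Fin (k + 1) → X) :
    σ ∘ face mu i a = face mu' i (σ ∘ a) := by
  funext j
  simp only [face, Function.comp_apply]
  split_ifs <;> simp only [hσ]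

theorem map_hochD {W X' Z : Type*} [AddCommGroup Z] {muW : W → W → W}
    {mu' : X' → X' → X'} {aL' : X' → Z → Z} {aR' : Z → X' → Z} {σ : W → X} {τ : W → X'}
    (p : Y →+ Z) (hσ : ∀ w w', σ (muW w w') = mu (σ w) (σ w'))
    (hτ : ∀ w w', τ (muW w w') = mu' (τ w) (τ w'))
    (hL : ∀ w y, p (aL (σ w) y) = aL' (τ w) (p y)) (hR : ∀ y w, p (aR y (σ w)) = aR' (p y) (τ w))
    {k : ℕ} {f : (Fin k → X) → Y} {g : (Fin k → X') → Z} (hfg : ∀ v, p (f (σ ∘ v)) = g (τ ∘ v))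
    (w : Fin (k + 1) → W) :
    p (hochD mu aL aR f (σ ∘ w)) = hochD mu' aL' aR' g (τ ∘ w) := by
  simp only [hochD_apply, map_add, map_sum, map_zsmul, ← map_face hσ, ← map_face hτ,
    ← Fin.comp_tail, ← Fin.comp_init, hfg, Function.comp_apply, hL, hR]

theorem IsBimodule.of_hom {W Z : Type*} [AddCommGroup Z] {muW : W → W → W} {aLW : W → Z → Z}
    {aRW : Z → W → Z} (h : IsBimodule mu aL aR) {σ : W → X} (hσ_inj : Function.Injective σ)
    {p : Y →+ Z} (hp : Function.Surjective p) (hσ : ∀ w w', σ (muW w w') = mu (σ w) (σ w'))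
    (hL : ∀ w y, p (aL (σ w) y) = aLW w (p y)) (hR : ∀ y w, p (aR y (σ w)) = aRW (p y) w) :
    IsBimodule muW aLW aRW where
  mul_assoc w w' w'' := hσ_inj (by simp only [hσ, h.mul_assoc])
  left_add w z z' := by
    obtain ⟨y, rfl⟩ := hp z
    obtain ⟨y', rfl⟩ := hp z'
    rw [← map_add, ← hL, ← hL, ← hL, h.left_add, map_add]
  right_add z z' w := by
    obtain ⟨y, rfl⟩ := hp z
    obtain ⟨y', rfl⟩ := hp z'
    rw [← map_add, ← hR, ← hR, ← hR, h.right_add, map_add]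
  left_mul w w' z := by
    obtain ⟨y, rfl⟩ := hp z
    rw [← hL, ← hL, ← hL, hσ, h.left_mul]
  left_right w z w' := by
    obtain ⟨y, rfl⟩ := hp z
    rw [← hL, ← hR, ← hR, ← hL, h.left_right]
  right_mul z w w' := by
    obtain ⟨y, rfl⟩ := hp z
    rw [← hR, ← hR, ← hR, hσ, h.right_mul]

end Complex

end Hochschild

namespace RelativeRotaBaxter

open Hochschild

variable {K : Type*} [CommSemiring K] {A M B N : Type*}
  [AddCommGroup A] [Module K A] [AddCommGroup M] [Module K M]
  [AddCommGroup B] [Module K B] [AddCommGroup N] [Module K N]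

theorem isBimodule_of_bilinear {V : Type*} [AddCommGroup V] [Module K V]
    {mul : A →ₗ[K] A →ₗ[K] A} {vl : A →ₗ[K] V →ₗ[K] V} {vr : V →ₗ[K] A →ₗ[K] V}
    (hmul : ∀ a b c : A, mul (mul a b) c = mul a (mul b c))
    (hvl : ∀ (a a' : A) (v : V), vl (mul a a') v = vl a (vl a' v))
    (hvlr : ∀ (a : A) (v : V) (a' : A), vr (vl a v) a' = vl a (vr v a'))
    (hvr : ∀ (v : V) (a a' : A), vr (vr v a) a' = vr v (mul a a')) :
    IsBimodule (mul · ·) (vl · ·) (vr · ·) where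
  mul_assoc := hmul
  left_add a := map_add (vl a)
  right_add v v' a := by simp only [map_add, LinearMap.add_apply]
  left_mul := hvl
  left_right := hvlr
  right_mul := hvr

section Semidirect

variable (mul : A →ₗ[K] A →ₗ[K] A) (al : A →ₗ[K] M →ₗ[K] M) (ar : M →ₗ[K] A →ₗ[K] M)
  (bl : A →ₗ[K] B →ₗ[K] B) (br : B →ₗ[K] A →ₗ[K] B) (nl : A →ₗ[K] N →ₗ[K] N)
  (nr : N →ₗ[K] A →ₗ[K] N) (l : M →ₗ[K] B →ₗ[K] N) (r : B →ₗ[K] M →ₗ[K] N)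

def semidirectMul : A × M → A × M → A × M := fun p q => (mul p.1 q.1, al p.1 q.2 + ar p.2 q.1)

def semidirectLeft : A × M → B × N → B × N := fun p w => (bl p.1 w.1, nl p.1 w.2 + l p.2 w.1)

def semidirectRight : B × N → A × M → B × N := fun w p => (br w.1 p.1, r w.1 p.2 + nr w.2 p.1)

variable {mul al ar bl br nl nr l r} in
theorem isBimodule_semidirect (hM : IsBimodule (mul · ·) (al · ·) (ar · ·))
    (hB : IsBimodule (mul · ·) (bl · ·) (br · ·)) (hN : IsBimodule (mul · ·) (nl · ·) (nr · ·))
    (hl1 : ∀ (a : A) (m : M) (b : B), l (al a m) b = nl a (l m b))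
    (hl2 : ∀ (m : M) (a : A) (b : B), l (ar m a) b = l m (bl a b))
    (hl3 : ∀ (m : M) (b : B) (a : A), l m (br b a) = nr (l m b) a)
    (hr1 : ∀ (a : A) (b : B) (m : M), r (bl a b) m = nl a (r b m))
    (hr2 : ∀ (b : B) (a : A) (m : M), r (br b a) m = r b (al a m))
    (hr3 : ∀ (b : B) (m : M) (a : A), r b (ar m a) = nr (r b m) a) :
    IsBimodule (semidirectMul mul al ar) (semidirectLeft bl nl l) (semidirectRight br nr r) where
  mul_assoc p q s := Prod.ext (hM.mul_assoc _ _ _) <| by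
    simp only [semidirectMul, map_add, LinearMap.add_apply, hM.left_mul, hM.left_right,
      hM.right_mul]
    abel
  left_add p w w' := Prod.ext (hB.left_add _ _ _) <| by
    simp only [semidirectLeft, Prod.fst_add, Prod.snd_add, map_add]
    abel
  right_add w w' p := Prod.ext (hB.right_add _ _ _) <| by
    simp only [semidirectRight, Prod.fst_add, Prod.snd_add, map_add, LinearMap.add_apply]
    abel
  left_mul p q w := Prod.ext (hB.left_mul _ _ _) <| by
    simp only [semidirectLeft, semidirectMul, map_add, LinearMap.add_apply, hN.left_mul, hl1, hl2]
    abel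
  left_right p w q := Prod.ext (hB.left_right _ _ _) <| by
    simp only [semidirectLeft, semidirectRight, map_add, LinearMap.add_apply, hN.left_right, hr1,
      hl3]
    abel
  right_mul w p q := Prod.ext (hB.right_mul _ _ _) <| by
    simp only [semidirectRight, semidirectMul, map_add, LinearMap.add_apply, hN.right_mul, hr2,
      hr3]
    abel

end Semidirect

section Total

variable (al : A →ₗ[K] M →ₗ[K] M) (ar : M →ₗ[K] A →ₗ[K] M) (R : M →ₗ[K] A) (S : N →ₗ[K] B)
  (bl : A →ₗ[K] B →ₗ[K] B) (br : B →ₗ[K] A →ₗ[K] B) (l : M →ₗ[K] B →ₗ[K] N)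
  (r : B →ₗ[K] M →ₗ[K] N)

def totalMul : M → M → M := fun m m' => al (R m) m' + ar m (R m')

def totalLeft : M → B → B := fun m b => bl (R m) b - S (l m b)

def totalRight : B → M → B := fun b m => br b (R m) - S (r b m)

def graph (m : M) : A × M := (R m, m)

def projS : B × N →+ B := AddMonoidHom.mk' (fun y => y.1 - S y.2) fun y y' => by
  simp only [Prod.fst_add, Prod.snd_add, map_add]
  abel

theorem graph_injective : Function.Injective (graph R) := fun _ _ h => congrArg Prod.snd h

theorem projS_surjective : Function.Surjective (projS S) := fun b => ⟨(b, 0), by simp [projS]⟩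

variable {al ar R S bl br l r}

theorem graph_totalMul {mul : A →ₗ[K] A →ₗ[K] A}
    (hR : ∀ m m' : M, mul (R m) (R m') = R (al (R m) m' + ar m (R m'))) (m m' : M) :
    graph R (totalMul al ar R m m') = semidirectMul mul al ar (graph R m) (graph R m') :=
  Prod.ext (hR m m').symm rfl

theorem projS_semidirectLeft {nl : A →ₗ[K] N →ₗ[K] N}
    (hrs : ∀ (m : M) (n : N), bl (R m) (S n) = S (nl (R m) n + l m (S n))) (m : M) (y : B × N) :
    projS S (semidirectLeft bl nl l (graph R m) y) = totalLeft R S bl l m (projS S y) := by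
  simp only [projS, semidirectLeft, graph, totalLeft, AddMonoidHom.mk'_apply, map_sub, map_add,
    hrs]
  abel

theorem projS_semidirectRight {nr : N →ₗ[K] A →ₗ[K] N}
    (hsr : ∀ (n : N) (m : M), br (S n) (R m) = S (r (S n) m + nr n (R m))) (y : B × N) (m : M) :
    projS S (semidirectRight br nr r y (graph R m)) = totalRight R S br r (projS S y) m := by
  simp only [projS, semidirectRight, graph, totalRight, AddMonoidHom.mk'_apply, map_sub, map_add,
    LinearMap.sub_apply, hsr]
  abel

theorem isBimodule_total {mul : A →ₗ[K] A →ₗ[K] A} {nl : A →ₗ[K] N →ₗ[K] N}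
    {nr : N →ₗ[K] A →ₗ[K] N}
    (hX : IsBimodule (semidirectMul mul al ar) (semidirectLeft bl nl l) (semidirectRight br nr r))
    (hR : ∀ m m' : M, mul (R m) (R m') = R (al (R m) m' + ar m (R m')))
    (hrs : ∀ (m : M) (n : N), bl (R m) (S n) = S (nl (R m) n + l m (S n)))
    (hsr : ∀ (n : N) (m : M), br (S n) (R m) = S (r (S n) m + nr n (R m))) :
    IsBimodule (totalMul al ar R) (totalLeft R S bl l) (totalRight R S br r) :=
  hX.of_hom (graph_injective R) (projS_surjective S) (graph_totalMul hR)
    (projS_semidirectLeft hrs) (projS_semidirectRight hsr)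

end Total

section Mixed

variable {mul : A →ₗ[K] A →ₗ[K] A} {al : A →ₗ[K] M →ₗ[K] M} {ar : M →ₗ[K] A →ₗ[K] M}
  {R : M →ₗ[K] A} {S : N →ₗ[K] B}
  {bl : A →ₗ[K] B →ₗ[K] B} {br : B →ₗ[K] A →ₗ[K] B} {nl : A →ₗ[K] N →ₗ[K] N}
  {nr : N →ₗ[K] A →ₗ[K] N} {l : M →ₗ[K] B →ₗ[K] N} {r : B →ₗ[K] M →ₗ[K] N} {n : ℕ}

def mixedPair (α : (Fin n → A) → B) (β : (Fin n → A × M) → N) : (Fin n → A × M) → B × N :=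
  fun z => (α (fun j => (z j).1), β z)

theorem dMix_eq_snd_hochD (α : (Fin n → A) → B) (β : (Fin n → A × M) → N) :
    dMix (mul · ·) (al · ·) (ar · ·) (bl · ·) (br · ·) (nl · ·) (nr · ·) (l · ·) (r · ·) α β
      = fun x => (hochD (semidirectMul mul al ar) (semidirectLeft bl nl l)
          (semidirectRight br nr r) (mixedPair α β) x).2 := rfl

theorem hochD_mixedPair (α : (Fin n → A) → B) (β : (Fin n → A × M) → N) :
    hochD (semidirectMul mul al ar) (semidirectLeft bl nl l) (semidirectRight br nr r)
        (mixedPair α β)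
      = mixedPair (dAB (mul · ·) (bl · ·) (br · ·) α)
          (dMix (mul · ·) (al · ·) (ar · ·) (bl · ·) (br · ·) (nl · ·) (nr · ·) (l · ·) (r · ·)
            α β) := by
  funext x
  refine Prod.ext ?_ rfl
  exact map_hochD (mu := semidirectMul mul al ar) (aL := semidirectLeft bl nl l)
    (aR := semidirectRight br nr r) (mu' := (mul · ·)) (aL' := (bl · ·)) (aR' := (br · ·))
    (σ := id) (τ := Prod.fst) (f := mixedPair α β) (AddMonoidHom.fst B N) (fun _ _ => rfl)
    (fun _ _ => rfl) (fun _ _ => rfl) (fun _ _ => rfl) (fun _ => rfl) x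

theorem dMix_dAB_dMix
    (hX : IsBimodule (semidirectMul mul al ar) (semidirectLeft bl nl l) (semidirectRight br nr r))
    (α : (Fin n → A) → B) (β : (Fin n → A × M) → N) (x : Fin (n + 2) → A × M) :
    dMix (mul · ·) (al · ·) (ar · ·) (bl · ·) (br · ·) (nl · ·) (nr · ·) (l · ·) (r · ·)
      (dAB (mul · ·) (bl · ·) (br · ·) α)
      (dMix (mul · ·) (al · ·) (ar · ·) (bl · ·) (br · ·) (nl · ·) (nr · ·) (l · ·) (r · ·) α β)
      x = 0 := by
  rw [dMix_eq_snd_hochD, ← hochD_mixedPair]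
  dsimp only
  rw [hochD_hochD hX]
  rfl

variable (al ar) in
def faceM (i : ℕ) (a : Fin (n + 1) → A) (u : Fin (n + 1) → M) : Fin n → M :=
  fun j => if (j : ℕ) < i then u j.castSucc
    else if (j : ℕ) = i then al (a j.castSucc) (u j.succ) + ar (u j.castSucc) (a j.succ)
    else u j.succ

theorem face_prod (i : ℕ) (a : Fin (n + 1) → A) (u : Fin (n + 1) → M) :
    face (semidirectMul mul al ar) i (Function.prod a u)
      = Function.prod (face (mul · ·) i a) (faceM al ar i a u) := by
  funext j
  simp only [face, faceM, Function.prod, semidirectMul]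
  split_ifs <;> rfl

theorem faceM_add (i : ℕ) (a : Fin (n + 1) → A) (u v : Fin (n + 1) → M) :
    faceM al ar i a (u + v) = faceM al ar i a u + faceM al ar i a v := by
  funext j
  simp only [faceM, Pi.add_apply]
  split_ifs
  · rfl
  · simp only [map_add, LinearMap.add_apply]
    abel
  · rfl

theorem faceM_update_zero_single (j : ℕ) (a : Fin (n + 1) → A) (i : Fin (n + 1)) (v : M) :
    faceM al ar j (Function.update a i 0) (Pi.single i v) = faceM al ar j a (Pi.single i v) := by
  funext t
  simp only [faceM]
  split_ifs
  · rfl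
  · rcases eq_or_ne t.castSucc i with rfl | h
    · have h : t.succ ≠ t.castSucc := Fin.castSucc_lt_succ.ne'
      simp [Function.update_of_ne h, Pi.single_eq_of_ne h]
    · simp [Function.update_of_ne h, Pi.single_eq_of_ne h]
  · rfl

theorem faceM_single {j : ℕ} (hj : j < n) (a : Fin (n + 1) → A) (i : Fin (n + 1)) (v : M) :
    faceM al ar j a (Pi.single i v)
      = Pi.single (Fin.predAbove ⟨j, hj⟩ i)
          (faceM al ar j a (Pi.single i v) (Fin.predAbove ⟨j, hj⟩ i)) := by
  funext t
  rcases eq_or_ne t (Fin.predAbove ⟨j, hj⟩ i) with rfl | ht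
  · simp
  have hv := Fin.val_predAbove ⟨j, hj⟩ i
  rw [Pi.single_eq_of_ne ht]
  rw [Ne, Fin.ext_iff] at ht
  simp only [faceM, Pi.single_apply, Fin.ext_iff, Fin.val_castSucc, Fin.val_succ] at hv ht ⊢
  split_ifs at hv ⊢ <;> first | omega | simp

/-- Such a cochain is determined, additively in the `M`-entries, by its values on the tuples
with a single `M`-entry, i.e. on `𝒜^{k-1,1}`. -/
structure IsSlotLinear (g : (Fin n → A × M) → N) : Prop where
  prod_add : ∀ a u v, g (Function.prod a (u + v)) = g (Function.prod a u) + g (Function.prod a v)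
  update_single : ∀ a i v,
    g (Function.prod (Function.update a i 0) (Pi.single i v)) = g (Function.prod a (Pi.single i v))

theorem IsSlotLinear.prod_zero {g : (Fin n → A × M) → N} (hg : IsSlotLinear g) (a : Fin n → A) :
    g (Function.prod a 0) = 0 := by
  simpa using hg.prod_add a 0 0

theorem IsSlotLinear.sum_update_single {g : (Fin n → A × M) → N} (hg : IsSlotLinear g)
    (a : Fin n → A) (u : Fin n → M) :
    ∑ i, g (Function.prod (Function.update a i 0) (Pi.single i (u i))) = g (Function.prod a u) := by
  let gₐ : (Fin n → M) →+ N := AddMonoidHom.mk' (fun u => g (Function.prod a u)) (hg.prod_add a)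
  simp only [hg.update_single]
  exact (map_sum gₐ _ _).symm.trans (congrArg gₐ (Finset.univ_sum_single u))

theorem dMix_prod_apply (α : (Fin n → A) → B) (g : (Fin n → A × M) → N) (a : Fin (n + 1) → A)
    (u : Fin (n + 1) → M) :
    dMix (mul · ·) (al · ·) (ar · ·) (bl · ·) (br · ·) (nl · ·) (nr · ·) (l · ·) (r · ·) α g
        (Function.prod a u)
      = nl (a 0) (g (Function.prod (Fin.tail a) (Fin.tail u))) + l (u 0) (α (Fin.tail a))
        + ∑ i ∈ Finset.range n,
            ((-1 : ℤ) ^ (i + 1)) • g (Function.prod (face (mul · ·) i a) (faceM al ar i a u))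
        + ((-1 : ℤ) ^ (n + 1)) • (r (α (Fin.init a)) (u (Fin.last n))
            + nr (g (Function.prod (Fin.init a) (Fin.init u))) (a (Fin.last n))) := by
  rw [dMix_eq_snd_hochD]
  simp only [hochD_apply, face_prod, Prod.snd_add, Prod.snd_sum, Prod.smul_snd, semidirectLeft,
    semidirectRight, mixedPair]
  rfl

theorem IsSlotLinear.dMix {g : (Fin n → A × M) → N} (hg : IsSlotLinear g)
    (α : (Fin n → A) → B) :
    IsSlotLinear
      (dMix (mul · ·) (al · ·) (ar · ·) (bl · ·) (br · ·) (nl · ·) (nr · ·) (l · ·) (r · ·)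
        α g) where
  prod_add a u v := by
    have htail : Fin.tail (u + v) = Fin.tail u + Fin.tail v := rfl
    have hinit : Fin.init (u + v) = Fin.init u + Fin.init v := rfl
    simp only [dMix_prod_apply, htail, hinit, faceM_add, hg.prod_add, Pi.add_apply, map_add,
      LinearMap.add_apply, smul_add, Finset.sum_add_distrib]
    abel
  update_single a i v := by
    simp only [dMix_prod_apply]
    have hmul₀ : ∀ x : A, mul 0 x = 0 := fun x => by simp
    have hmul₀' : ∀ x : A, mul x 0 = 0 := fun x => by simp
    congr 2
    · cases i using Fin.cases with
      | zero => simp [Fin.tail_single_zero, hg.prod_zero]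
      | succ i =>
        rw [Function.update_of_ne (Fin.succ_ne_zero i).symm, Fin.tail_update_succ,
          Fin.tail_single_succ, hg.update_single, Pi.single_eq_of_ne (Fin.succ_ne_zero i).symm,
          map_zero, LinearMap.zero_apply, LinearMap.zero_apply]
    · refine Finset.sum_congr rfl fun j hj => ?_
      have hj := Finset.mem_range.mp hj
      rw [faceM_update_zero_single, faceM_single hj, face_update_zero _ hmul₀ hmul₀' hj,
        hg.update_single]
    · cases i using Fin.lastCases with
      | last => simp [Fin.init_single_last, hg.prod_zero]
      | cast i =>
        rw [Function.update_of_ne (Fin.castSucc_lt_last i).ne', Fin.init_update_castSucc,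
          Fin.init_single_castSucc, hg.update_single,
          Pi.single_eq_of_ne (Fin.castSucc_lt_last i).ne', map_zero, map_zero]

/-- The tuples representing elementary tensors of `(A ⊕ M)^{⊗n}`. -/
def IsPure (z : Fin n → A × M) : Prop := ∀ j, (z j).1 = 0 ∨ (z j).2 = 0

theorem isPure_face {z : Fin (n + 1) → A × M} (hz : IsPure z) (i : ℕ) :
    IsPure (face (semidirectMul mul al ar) i z) := by
  intro j
  simp only [face]
  split_ifs
  · exact hz _
  · rcases hz j.castSucc with h | h <;> rcases hz j.succ with h' | h' <;>
      simp [semidirectMul, h, h']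
  · exact hz _

theorem dMix_congr_of_isPure {g g' : (Fin n → A × M) → N}
    (hgg' : ∀ z, IsPure z → g z = g' z) (α : (Fin n → A) → B) {x : Fin (n + 1) → A × M}
    (hx : IsPure x) :
    dMix (mul · ·) (al · ·) (ar · ·) (bl · ·) (br · ·) (nl · ·) (nr · ·) (l · ·) (r · ·) α g x
      = dMix (mul · ·) (al · ·) (ar · ·) (bl · ·) (br · ·) (nl · ·) (nr · ·) (l · ·) (r · ·) α g'
          x := by
  simp only [dMix_eq_snd_hochD]
  congr 1
  refine hochD_congr ?_ (fun i _ => ?_) ?_ <;> refine Prod.ext rfl (hgg' _ ?_)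
  · exact fun j => hx j.succ
  · exact isPure_face hx i
  · exact fun j => hx j.castSucc

/-- `βs s` may depend on an `A`-argument at position `s`, where `𝒜^{k-1,1}` has the
`M`-factor; `clearSlot` removes that dependence. -/
def clearSlot (βs : Fin n → ((Fin n → A) → M → N)) : Fin n → ((Fin n → A) → M → N) :=
  fun s a m => βs s (Function.update a s 0) m

theorem extMixed_eq_clearSlot_of_isPure {βs : Fin n → ((Fin n → A) → M → N)}
    (hadd : ∀ s a (m m' : M), βs s a (m + m') = βs s a m + βs s a m') {z : Fin n → A × M}
    (hz : IsPure z) : extMixed βs z = extMixed (clearSlot βs) z := by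
  have hzero : ∀ s a, βs s a 0 = 0 := fun s a => by simpa using hadd s a 0 0
  refine Finset.sum_congr rfl fun s _ => ?_
  rcases hz s with h | h
  · simp only [clearSlot, ← h, Function.update_eq_self]
  · simp only [clearSlot, h, hzero]

theorem isSlotLinear_extMixed_clearSlot {βs : Fin n → ((Fin n → A) → M → N)}
    (hadd : ∀ s a (m m' : M), βs s a (m + m') = βs s a m + βs s a m') :
    IsSlotLinear (extMixed (clearSlot βs)) where
  prod_add a u v := by
    simp only [extMixed, clearSlot, Function.prod, Pi.add_apply, hadd, Finset.sum_add_distrib]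
  update_single a i v := by
    have hzero : ∀ s a, βs s a 0 = 0 := fun s a => by simpa using hadd s a 0 0
    refine Finset.sum_congr rfl fun s _ => ?_
    rcases eq_or_ne s i with rfl | hs
    · simp only [clearSlot, Function.prod, Function.update_idem]
    · simp only [clearSlot, Function.prod, Pi.single_eq_of_ne hs, hzero]

theorem hRc_apply (α : (Fin n → A) → B) (g : (Fin n → A × M) → N) (m : Fin n → M) :
    hRc (R ·) (S ·) α g m = ((-1 : ℤ) ^ n) • (α (R ∘ m)
      - ∑ i, S (g (Function.prod (Function.update (R ∘ m) i 0) (Pi.single i (m i))))) := by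
  have htuple : ∀ i, (fun j => if j = i then ((0 : A), m j) else (R (m j), (0 : M)))
      = Function.prod (Function.update (R ∘ m) i 0) (Pi.single i (m i)) := fun i => by
    funext j
    rcases eq_or_ne j i with rfl | h
    · simp [Function.prod]
    · simp [Function.prod, h]
  simp only [hRc, htuple]
  rfl

theorem hRc_congr_of_isPure {g g' : (Fin n → A × M) → N} (hgg' : ∀ z, IsPure z → g z = g' z)
    (α : (Fin n → A) → B) : hRc (R ·) (S ·) α g = hRc (R ·) (S ·) α g' := by
  funext m
  simp only [hRc_apply]
  congr 3 with i
  refine congrArg S (hgg' _ fun j => ?_)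
  rcases eq_or_ne j i with rfl | h
  · simp [Function.prod]
  · simp [Function.prod, h]

theorem hRc_eq_of_isSlotLinear {g : (Fin n → A × M) → N} (hg : IsSlotLinear g)
    (α : (Fin n → A) → B) (m : Fin n → M) :
    hRc (R ·) (S ·) α g m = ((-1 : ℤ) ^ n) • projS S (mixedPair α g (graph R ∘ m)) := by
  rw [hRc_apply, ← map_sum, hg.sum_update_single]
  rfl

theorem dMB_eq_hochD (γ : (Fin n → M) → B) :
    dMB (al · ·) (ar · ·) (bl · ·) (br · ·) (R ·) (S ·) (l · ·) (r · ·) γ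
      = hochD (totalMul al ar R) (totalLeft R S bl l) (totalRight R S br r) γ := rfl

theorem totalLeft_add (m : M) (b b' : B) :
    totalLeft R S bl l m (b + b') = totalLeft R S bl l m b + totalLeft R S bl l m b' := by
  simp only [totalLeft, map_add]
  abel

theorem totalRight_add (b b' : B) (m : M) :
    totalRight R S br r (b + b') m = totalRight R S br r b m + totalRight R S br r b' m := by
  simp only [totalRight, map_add, LinearMap.add_apply]
  abel

theorem dMB_hRc_add_hRc_dMix (hR : ∀ m m' : M, mul (R m) (R m') = R (al (R m) m' + ar m (R m')))
    (hrs : ∀ (m : M) (n : N), bl (R m) (S n) = S (nl (R m) n + l m (S n)))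
    (hsr : ∀ (n : N) (m : M), br (S n) (R m) = S (r (S n) m + nr n (R m)))
    {g : (Fin n → A × M) → N} (hg : IsSlotLinear g) (α : (Fin n → A) → B)
    (m : Fin (n + 1) → M) :
    dMB (al · ·) (ar · ·) (bl · ·) (br · ·) (R ·) (S ·) (l · ·) (r · ·) (hRc (R ·) (S ·) α g) m
      + hRc (R ·) (S ·) (dAB (mul · ·) (bl · ·) (br · ·) α)
          (dMix (mul · ·) (al · ·) (ar · ·) (bl · ·) (br · ·) (nl · ·) (nr · ·) (l · ·) (r · ·)
            α g) m = 0 := by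
  have hfun : hRc (R ·) (S ·) α g
      = ((-1 : ℤ) ^ n) • fun v => projS S (mixedPair α g (graph R ∘ v)) :=
    funext fun v => hRc_eq_of_isSlotLinear hg α v
  have hnat := map_hochD (mu := semidirectMul mul al ar) (aL := semidirectLeft bl nl l)
    (aR := semidirectRight br nr r) (τ := id) (projS S) (graph_totalMul hR) (fun _ _ => rfl)
    (projS_semidirectLeft hrs) (projS_semidirectRight hsr) (f := mixedPair α g)
    (g := fun v => projS S (mixedPair α g (graph R ∘ v))) (fun _ => rfl) m
  rw [Function.id_comp] at hnat
  rw [dMB_eq_hochD, hfun, hochD_zsmul totalLeft_add totalRight_add, ← hnat, hochD_mixedPair,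
    hRc_eq_of_isSlotLinear (hg.dMix α), pow_succ, mul_neg_one, neg_smul, add_neg_cancel]

theorem dMB_hRc_add_hRc_dMix_extMixed
    (hR : ∀ m m' : M, mul (R m) (R m') = R (al (R m) m' + ar m (R m')))
    (hrs : ∀ (m : M) (n : N), bl (R m) (S n) = S (nl (R m) n + l m (S n)))
    (hsr : ∀ (n : N) (m : M), br (S n) (R m) = S (r (S n) m + nr n (R m)))
    {βs : Fin n → ((Fin n → A) → M → N)}
    (hadd : ∀ s a (m m' : M), βs s a (m + m') = βs s a m + βs s a m') (α : (Fin n → A) → B)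
    (m : Fin (n + 1) → M) :
    dMB (al · ·) (ar · ·) (bl · ·) (br · ·) (R ·) (S ·) (l · ·) (r · ·)
        (hRc (R ·) (S ·) α (extMixed βs)) m
      + hRc (R ·) (S ·) (dAB (mul · ·) (bl · ·) (br · ·) α)
          (dMix (mul · ·) (al · ·) (ar · ·) (bl · ·) (br · ·) (nl · ·) (nr · ·) (l · ·) (r · ·)
            α (extMixed βs)) m = 0 := by
  have hpure : ∀ z, IsPure z → extMixed βs z = extMixed (clearSlot βs) z :=
    fun _ hz => extMixed_eq_clearSlot_of_isPure hadd hz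
  rw [hRc_congr_of_isPure hpure, hRc_congr_of_isPure fun _ hz => dMix_congr_of_isPure hpure α hz]
  exact dMB_hRc_add_hRc_dMix hR hrs hsr (isSlotLinear_extMixed_clearSlot hadd) α m

end Mixed

end RelativeRotaBaxter

/-- The coboundary operator of a relative Rota-Baxter algebra with coefficients in a
bimodule squares to zero: `(δ_rRB)² = 0`. -/
theorem relative_rota_baxter_coboundary_squares_to_zero
    {K : Type*} [Field K] {A M B N : Type*}
    [AddCommGroup A] [Module K A] [AddCommGroup M] [Module K M]
    [AddCommGroup B] [Module K B] [AddCommGroup N] [Module K N]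
    (mul : A →ₗ[K] A →ₗ[K] A)
    (hmul : ∀ a b c : A, mul (mul a b) c = mul a (mul b c))
    (al : A →ₗ[K] M →ₗ[K] M) (ar : M →ₗ[K] A →ₗ[K] M)
    (hal : ∀ (a b : A) (m : M), al (mul a b) m = al a (al b m))
    (halr : ∀ (a : A) (m : M) (b : A), ar (al a m) b = al a (ar m b))
    (har : ∀ (m : M) (a b : A), ar (ar m a) b = ar m (mul a b))
    (R : M →ₗ[K] A)
    (hR : ∀ m m' : M, mul (R m) (R m') = R (al (R m) m' + ar m (R m')))
    (S : N →ₗ[K] B)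
    (bl : A →ₗ[K] B →ₗ[K] B) (br : B →ₗ[K] A →ₗ[K] B)
    (hbl : ∀ (a a' : A) (b : B), bl (mul a a') b = bl a (bl a' b))
    (hblr : ∀ (a : A) (b : B) (a' : A), br (bl a b) a' = bl a (br b a'))
    (hbr : ∀ (b : B) (a a' : A), br (br b a) a' = br b (mul a a'))
    (nl : A →ₗ[K] N →ₗ[K] N) (nr : N →ₗ[K] A →ₗ[K] N)
    (hnl : ∀ (a a' : A) (n : N), nl (mul a a') n = nl a (nl a' n))
    (hnlr : ∀ (a : A) (n : N) (a' : A), nr (nl a n) a' = nl a (nr n a'))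
    (hnr : ∀ (n : N) (a a' : A), nr (nr n a) a' = nr n (mul a a'))
    (l : M →ₗ[K] B →ₗ[K] N) (r : B →ₗ[K] M →ₗ[K] N)
    (hl1 : ∀ (a : A) (m : M) (b : B), l (al a m) b = nl a (l m b))
    (hl2 : ∀ (m : M) (a : A) (b : B), l (ar m a) b = l m (bl a b))
    (hl3 : ∀ (m : M) (b : B) (a : A), l m (br b a) = nr (l m b) a)
    (hr1 : ∀ (a : A) (b : B) (m : M), r (bl a b) m = nl a (r b m))
    (hr2 : ∀ (b : B) (a : A) (m : M), r (br b a) m = r b (al a m))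
    (hr3 : ∀ (b : B) (m : M) (a : A), r b (ar m a) = nr (r b m) a)
    (hrs : ∀ (m : M) (n : N), bl (R m) (S n) = S (nl (R m) n + l m (S n)))
    (hsr : ∀ (n : N) (m : M), br (S n) (R m) = S (r (S n) m + nr n (R m))) :
    -- on 1-cochains (α, β) ∈ C¹ = Hom(A,B) ⊕ Hom(M,N):
    (∀ (α : (Fin 1 → A) → B) (βs : Fin 1 → ((Fin 1 → A) → M → N)),
      (∀ (s : Fin 1) (a : Fin 1 → A) (m m' : M),
          βs s a (m + m') = βs s a m + βs s a m') →
      let β : (Fin 1 → A × M) → N := extMixed βs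
      (∀ a : Fin 3 → A,
        dAB (fun x y => mul x y) (fun x y => bl x y) (fun x y => br x y)
          (dAB (fun x y => mul x y) (fun x y => bl x y) (fun x y => br x y) α) a = 0) ∧
      (∀ x : Fin 3 → A × M,
        dMix (fun x y => mul x y) (fun x y => al x y) (fun x y => ar x y)
            (fun x y => bl x y) (fun x y => br x y) (fun x y => nl x y)
            (fun x y => nr x y) (fun x y => l x y) (fun x y => r x y)
            (dAB (fun x y => mul x y) (fun x y => bl x y) (fun x y => br x y) α)
            (dMix (fun x y => mul x y) (fun x y => al x y) (fun x y => ar x y)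
              (fun x y => bl x y) (fun x y => br x y) (fun x y => nl x y)
              (fun x y => nr x y) (fun x y => l x y) (fun x y => r x y) α β) x = 0) ∧
      (∀ m : Fin 2 → M,
        dMB (fun x y => al x y) (fun x y => ar x y) (fun x y => bl x y)
            (fun x y => br x y) (fun x => R x) (fun x => S x)
            (fun x y => l x y) (fun x y => r x y)
            (hRc (fun x => R x) (fun x => S x) α β) m
          + hRc (fun x => R x) (fun x => S x)
              (dAB (fun x y => mul x y) (fun x y => bl x y) (fun x y => br x y) α)
              (dMix (fun x y => mul x y) (fun x y => al x y) (fun x y => ar x y)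
                (fun x y => bl x y) (fun x y => br x y) (fun x y => nl x y)
                (fun x y => nr x y) (fun x y => l x y) (fun x y => r x y) α β) m = 0)) ∧
    -- on k-cochains (α, β, γ) ∈ Cᵏ for k ≥ 2:
    (∀ (k : ℕ) (α : (Fin (k + 1) → A) → B)
        (βs : Fin (k + 1) → ((Fin (k + 1) → A) → M → N))
        (γ : (Fin k → M) → B),
      (∀ (s : Fin (k + 1)) (a : Fin (k + 1) → A) (m m' : M),
          βs s a (m + m') = βs s a m + βs s a m') →
      let β : (Fin (k + 1) → A × M) → N := extMixed βs
      (∀ a : Fin (k + 3) → A,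
        dAB (fun x y => mul x y) (fun x y => bl x y) (fun x y => br x y)
          (dAB (fun x y => mul x y) (fun x y => bl x y) (fun x y => br x y) α) a = 0) ∧
      (∀ x : Fin (k + 3) → A × M,
        dMix (fun x y => mul x y) (fun x y => al x y) (fun x y => ar x y)
            (fun x y => bl x y) (fun x y => br x y) (fun x y => nl x y)
            (fun x y => nr x y) (fun x y => l x y) (fun x y => r x y)
            (dAB (fun x y => mul x y) (fun x y => bl x y) (fun x y => br x y) α)
            (dMix (fun x y => mul x y) (fun x y => al x y) (fun x y => ar x y)
              (fun x y => bl x y) (fun x y => br x y) (fun x y => nl x y)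
              (fun x y => nr x y) (fun x y => l x y) (fun x y => r x y) α β) x = 0) ∧
      (∀ m : Fin (k + 2) → M,
        dMB (fun x y => al x y) (fun x y => ar x y) (fun x y => bl x y)
            (fun x y => br x y) (fun x => R x) (fun x => S x)
            (fun x y => l x y) (fun x y => r x y)
            (dMB (fun x y => al x y) (fun x y => ar x y) (fun x y => bl x y)
                (fun x y => br x y) (fun x => R x) (fun x => S x)
                (fun x y => l x y) (fun x y => r x y) γ
              + hRc (fun x => R x) (fun x => S x) α β) m
          + hRc (fun x => R x) (fun x => S x)
              (dAB (fun x y => mul x y) (fun x y => bl x y) (fun x y => br x y) α)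
              (dMix (fun x y => mul x y) (fun x y => al x y) (fun x y => ar x y)
                (fun x y => bl x y) (fun x y => br x y) (fun x y => nl x y)
                (fun x y => nr x y) (fun x y => l x y) (fun x y => r x y) α β) m = 0)) := by
  open Hochschild RelativeRotaBaxter in
  have hA := isBimodule_of_bilinear hmul hbl hblr hbr
  have hX := isBimodule_semidirect (isBimodule_of_bilinear hmul hal halr har) hA
    (isBimodule_of_bilinear hmul hnl hnlr hnr) hl1 hl2 hl3 hr1 hr2 hr3
  have hTot := isBimodule_total hX hR hrs hsr
  refine ⟨fun α βs hadd => ⟨hochD_hochD hA α, dMix_dAB_dMix hX α _,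
    dMB_hRc_add_hRc_dMix_extMixed hR hrs hsr hadd α⟩, fun k α βs γ hadd =>
    ⟨hochD_hochD hA α, dMix_dAB_dMix hX α _, fun m => ?_⟩⟩
  simp only [dMB_eq_hochD]
  rw [hochD_add hTot.left_add hTot.right_add, hochD_hochD hTot, zero_add]
  exact dMB_hRc_add_hRc_dMix_extMixed hR hrs hsr hadd α m
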